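/- Assume that 1 − T : M → M is invertible. Then γ is bi-additive: γ(x + x', y) = γ(x, y) · γ(x', y) and γ(x, y + y') = γ(x, y) · γ(x, y') in Adj(A(M,T)) for all x, x', y, y' ∈ M. -/

import Mathlib

/-!
Common setup: the adjoint group of the Alexander quandle `A(M,T)` (F.J.-B.J. Clauwens,
"The adjoint group of an Alexander quandle").

For an abelian group `M` with automorphism `T`, the Alexander quandle `A(M,T)` is `M` with
`y * x = T y + x - T x`, and the adjoint group `Adj(A(M,T))` is presented with generators
`e x` for `x : M` and relations `e (y * x) = (e x)⁻¹ * e y * e x`.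
-/

open scoped TensorProduct

namespace Clauwens

variable {M : Type*} [AddCommGroup M]

/-- The relations of the adjoint group of the Alexander quandle `A(M,T)`:
for each `x y : M`, the relation `e_{y*x} = e_x⁻¹ * e_y * e_x`, where `y*x = T y + x - T x`. -/
def rels (T : M ≃+ M) : Set (FreeGroup M) :=
  {r | ∃ x y : M, r = FreeGroup.of (T y + x - T x) *
      ((FreeGroup.of x)⁻¹ * FreeGroup.of y * FreeGroup.of x)⁻¹}

/-- The adjoint group `Adj(A(M,T))` of the Alexander quandle. -/
abbrev Adj (T : M ≃+ M) : Type _ := PresentedGroup (rels T)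

/-- The generator `e_x` of the adjoint group. -/
def e (T : M ≃+ M) (x : M) : Adj T := PresentedGroup.of x

/-- The quandle automorphism `p ↦ p * x = T p + x - T x` of `A(M,T)`. -/
def σ (T : M ≃+ M) (x : M) : Equiv.Perm M where
  toFun p := T p + (x - T x)
  invFun p := T.symm (p - (x - T x))
  left_inv p := by simp
  right_inv p := by simp

lemma σ_apply (T : M ≃+ M) (x p : M) : σ T x p = T p + (x - T x) := rfl

lemma σ_inv_apply (T : M ≃+ M) (x p : M) : (σ T x)⁻¹ p = T.symm (p - (x - T x)) := rfl

lemma σ_rel (T : M ≃+ M) (x y : M) :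
    σ T x * σ T y * (σ T x)⁻¹ = σ T (T y + x - T x) := by
  ext p
  simp only [Equiv.Perm.mul_apply, σ_apply, σ_inv_apply, map_add, map_sub,
    AddEquiv.apply_symm_apply]
  abel

/-- The homomorphism `ρ` from the adjoint group to the group of quandle automorphisms of
`A(M,T)` acting on the right of `M` (hence the `ᵐᵒᵖ`), induced by the right action
`p · e_x = p * x = T p + x - T x`; the automorphism by which `g` acts is `(ρ T g).unop`. -/
def ρ (T : M ≃+ M) : Adj T →* (Equiv.Perm M)ᵐᵒᵖ :=
  PresentedGroup.toGroup (f := fun x => MulOpposite.op (σ T x)) (by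
    rintro r ⟨x, y, rfl⟩
    simp only [map_mul, map_inv, FreeGroup.lift_apply_of, ← MulOpposite.op_inv, ← MulOpposite.op_mul,
      mul_inv_rev, inv_inv]
    rw [MulOpposite.op_eq_one_iff, ← σ_rel T x y]
    group)

/-- `γ(x,y) = e_0⁻¹ e_{x+y} e_y⁻¹ e_0 e_x⁻¹ e_0`, so that
`e_0⁻¹ e_{x+y} = γ(x,y) e_0⁻¹ e_x e_0⁻¹ e_y`. -/
def γ (T : M ≃+ M) (x y : M) : Adj T :=
  (e T 0)⁻¹ * e T (x + y) * (e T y)⁻¹ * e T 0 * (e T x)⁻¹ * e T 0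

/-- `λ(x,y) = γ(y,x)⁻¹ γ(x,y)`. -/
def lam (T : M ≃+ M) (x y : M) : Adj T := (γ T y x)⁻¹ * γ T x y

/-- The additive endomorphism `τ` of `M ⊗_ℤ M` with `τ(x ⊗ y) = T y ⊗ x`. -/
noncomputable def τmap (T : M ≃+ M) : M ⊗[ℤ] M →ₗ[ℤ] M ⊗[ℤ] M :=
  (TensorProduct.comm ℤ M M).toLinearMap ∘ₗ
    (LinearMap.lTensor M T.toAddMonoidHom.toIntLinearMap)

lemma τmap_tmul (T : M ≃+ M) (x y : M) : τmap T (x ⊗ₜ[ℤ] y) = T y ⊗ₜ[ℤ] x := rfl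

/-- `S(M,T) = coker(1 - τ) = (M ⊗_ℤ M)/im(1 - τ)`. -/
abbrev S (T : M ≃+ M) : Type _ :=
  (M ⊗[ℤ] M) ⧸ LinearMap.range (LinearMap.id - τmap T)

/-- The class `[x ⊗ y]` in `S(M,T)`. -/
noncomputable def cls (T : M ≃+ M) (x y : M) : S T := Submodule.Quotient.mk (x ⊗ₜ[ℤ] y)

lemma mk_τmap (T : M ≃+ M) (w : M ⊗[ℤ] M) :
    (Submodule.Quotient.mk (τmap T w) : S T) = Submodule.Quotient.mk w := by
  rw [Submodule.Quotient.eq]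
  exact ⟨-w, by simp [LinearMap.sub_apply]; abel⟩

lemma cls_T (T : M ≃+ M) (x y : M) : cls T (T x) (T y) = cls T x y := by
  have h1 : cls T (T x) (T y) = Submodule.Quotient.mk (τmap T (T y ⊗ₜ[ℤ] x)) := rfl
  have h2 : (Submodule.Quotient.mk (T y ⊗ₜ[ℤ] x) : S T)
      = Submodule.Quotient.mk (τmap T (x ⊗ₜ[ℤ] y)) := rfl
  rw [h1, mk_τmap, h2, mk_τmap]; rfl

lemma cls_add_left (T : M ≃+ M) (x x' y : M) :
    cls T (x + x') y = cls T x y + cls T x' y := by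
  simp only [cls, ← Submodule.Quotient.mk_add, TensorProduct.add_tmul]

lemma cls_add_right (T : M ≃+ M) (x y y' : M) :
    cls T x (y + y') = cls T x y + cls T x y' := by
  simp only [cls, ← Submodule.Quotient.mk_add, TensorProduct.tmul_add]

lemma cls_neg_left (T : M ≃+ M) (x y : M) : cls T (-x) y = -cls T x y := by
  simp only [cls, ← Submodule.Quotient.mk_neg, TensorProduct.neg_tmul]

lemma cls_zero_left (T : M ≃+ M) (y : M) : cls T 0 y = 0 := by
  simp [cls, TensorProduct.zero_tmul]

lemma cls_zero_right (T : M ≃+ M) (x : M) : cls T x 0 = 0 := by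
  simp [cls, TensorProduct.tmul_zero]

/-- `T^m` for `m : ℤ`. -/
def Tz (T : M ≃+ M) (m : ℤ) : M ≃+ M := (m • T : AddAut M)

lemma Tz_zero (T : M ≃+ M) (x : M) : Tz T 0 x = x := rfl

lemma Tz_one (T : M ≃+ M) (x : M) : Tz T 1 x = T x := by simp [Tz]

lemma Tz_add (T : M ≃+ M) (m n : ℤ) (x : M) : Tz T (m + n) x = Tz T m (Tz T n x) := by
  simp [Tz, add_zsmul, AddAut.add_apply]

lemma cls_Tz_shift (T : M ≃+ M) (m : ℤ) (x y : M) :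
    cls T (Tz T (m + 1) x) (Tz T (m + 1) y) = cls T (Tz T m x) (Tz T m y) := by
  have h : ∀ z : M, Tz T (m + 1) z = T (Tz T m z) := by
    intro z; rw [add_comm, Tz_add, Tz_one]
  rw [h, h, cls_T]

lemma cls_Tz (T : M ≃+ M) (m : ℤ) (x y : M) :
    cls T (Tz T m x) (Tz T m y) = cls T x y := by
  induction m using Int.induction_on with
  | zero => rfl
  | succ i ih => rw [cls_Tz_shift, ih]
  | pred i ih =>
      have h := cls_Tz_shift T (-(i : ℤ) - 1) x y
      rw [sub_add_cancel] at h
      rw [← h, ih]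

/-- `F(M,T)` is the set `ℤ × M × S(M,T)` equipped with the multiplication
`(k, x, α)(m, y, β) = (k + m, T^m x + y, α + β + [T^m x ⊗ y])`. -/
abbrev F (T : M ≃+ M) : Type _ := ℤ × M × S T

noncomputable instance (T : M ≃+ M) : Group (F T) where
  mul g h := (g.1 + h.1, Tz T h.1 g.2.1 + h.2.1, g.2.2 + h.2.2 + cls T (Tz T h.1 g.2.1) h.2.1)
  one := ((0 : ℤ), (0 : M), (0 : S T))
  inv g := (-g.1, -(Tz T (-g.1) g.2.1), -g.2.2 + cls T g.2.1 g.2.1)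
  mul_assoc g h k := by
    obtain ⟨a, x, α⟩ := g; obtain ⟨b, y, β⟩ := h; obtain ⟨c, z, δ⟩ := k
    refine Prod.ext (add_assoc a b c) (Prod.ext ?_ ?_)
    · show Tz T c (Tz T b x + y) + z = Tz T (b + c) x + (Tz T c y + z)
      rw [add_comm b c, Tz_add, map_add]
      abel
    · show α + β + cls T (Tz T b x) y + δ + cls T (Tz T c (Tz T b x + y)) z
        = α + (β + δ + cls T (Tz T c y) z) + cls T (Tz T (b + c) x) (Tz T c y + z)
      rw [add_comm b c, Tz_add, map_add, cls_add_left, cls_add_right]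
      have h1 : cls T (Tz T c (Tz T b x)) (Tz T c y) = cls T (Tz T b x) y := cls_Tz T c _ _
      rw [h1]
      abel
  one_mul g := by
    obtain ⟨a, x, α⟩ := g
    refine Prod.ext (zero_add a) (Prod.ext ?_ ?_)
    · show Tz T a 0 + x = x
      rw [map_zero, zero_add]
    · show 0 + α + cls T (Tz T a 0) x = α
      rw [map_zero, cls_zero_left, zero_add, add_zero]
  mul_one g := by
    obtain ⟨a, x, α⟩ := g
    refine Prod.ext (add_zero a) (Prod.ext ?_ ?_)
    · show Tz T 0 x + 0 = x
      rw [Tz_zero, add_zero]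
    · show α + 0 + cls T (Tz T 0 x) 0 = α
      rw [cls_zero_right, add_zero, add_zero]
  inv_mul_cancel g := by
    obtain ⟨a, x, α⟩ := g
    have hx : Tz T a (Tz T (-a) x) = x := by
      rw [← Tz_add, add_neg_cancel, Tz_zero]
    refine Prod.ext (neg_add_cancel a) (Prod.ext ?_ ?_)
    · show Tz T a (-(Tz T (-a) x)) + x = 0
      rw [map_neg, hx, neg_add_cancel]
    · show -α + cls T x x + α + cls T (Tz T a (-(Tz T (-a) x))) x = 0
      rw [map_neg, hx, cls_neg_left]
      abel

/-- The canonical augmentation `ε : Adj(A(M,T)) → ℤ`, with `ε(e_x) = 1` for all `x`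
(written multiplicatively since `Adj` is a multiplicative group). -/
def ε (T : M ≃+ M) : Adj T →* Multiplicative ℤ :=
  PresentedGroup.toGroup (f := fun _ => Multiplicative.ofAdd (1 : ℤ)) (by
    rintro r ⟨x, y, rfl⟩
    simp only [map_mul, map_inv, FreeGroup.lift_apply_of]
    group)

/-- The subgroup `F(M,T)⁰` of elements `(0, x, α)` of `F(M,T)`. -/
noncomputable def Fo (T : M ≃+ M) : Subgroup (F T) where
  carrier := {g | g.1 = 0}
  mul_mem' := by
    rintro ⟨a, x, α⟩ ⟨b, y, β⟩ (ha : a = 0) (hb : b = 0)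
    show a + b = 0
    rw [ha, hb, add_zero]
  one_mem' := rfl
  inv_mem' := by
    rintro ⟨a, x, α⟩ (ha : a = 0)
    show -a = 0
    rw [ha, neg_zero]

/-- The fundamental group `π₁(A(M,T), 0)` of the Alexander quandle based at `0 ∈ M`:
the elements of `ker ε` fixing the base point `0`. -/
def pi1 (T : M ≃+ M) : Subgroup (Adj T) where
  carrier := {g | g ∈ (ε T).ker ∧ (ρ T g).unop 0 = 0}
  one_mem' := ⟨(ε T).ker.one_mem, by simp⟩
  mul_mem' := by
    intro a b ha hb
    refine ⟨(ε T).ker.mul_mem ha.1 hb.1, ?_⟩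
    show ((ρ T) (a * b)).unop 0 = 0
    rw [map_mul, MulOpposite.unop_mul, Equiv.Perm.mul_apply, ha.2, hb.2]
  inv_mem' := by
    intro a ha
    refine ⟨(ε T).ker.inv_mem ha.1, ?_⟩
    show ((ρ T) a⁻¹).unop 0 = 0
    rw [map_inv, MulOpposite.unop_inv]
    exact Equiv.Perm.inv_eq_iff_eq.mpr ha.2.symm

/-!
Put `a x = e₀⁻¹ e_x`, so that `a (x + y) = γ(x,y) a x a y`. Conjugation by `a w` acts on the
generators as the translation `e_z ↦ e_{z + (1 - T) w}`; since conjugation by `a x a y` and by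
`a (x + y)` therefore agree on generators, `γ` is central. If `u = (1 - T) w`, conjugating
`a (x + y) = γ(x,y) a x a y` by `a w` and comparing with conjugation by `a u` gives
`γ(x + y, u) = γ(x, u) γ(y, u)`, and surjectivity of `1 - T` reaches every `u`. Additivity in
the second variable then follows from the cocycle identity
`γ(x, y + z) γ(y, z) = γ(x + y, z) γ(x, y)`, which is associativity of `a (x + y + z)`.
-/

lemma e_rel (T : M ≃+ M) (x y : M) :
    e T (T y + x - T x) = (e T x)⁻¹ * e T y * e T x := by
  have h := PresentedGroup.one_of_mem (rels := rels T) ⟨x, y, rfl⟩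
  rw [map_mul, map_inv] at h
  exact mul_inv_eq_one.1 h

def a (T : M ≃+ M) (x : M) : Adj T := (e T 0)⁻¹ * e T x

lemma a_add (T : M ≃+ M) (x y : M) : a T (x + y) = γ T x y * a T x * a T y := by
  unfold γ a; group

lemma a_inv_mul_e_mul_a (T : M ≃+ M) (w z : M) :
    (a T w)⁻¹ * e T z * a T w = e T (z + (w - T w)) := by
  have h0 : e T 0 * e T z * (e T 0)⁻¹ = e T (T.symm z) := by
    have := e_rel T 0 (T.symm z)
    simp only [AddEquiv.apply_symm_apply, map_zero, sub_zero, add_zero] at this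
    rw [this]; group
  calc (a T w)⁻¹ * e T z * a T w = (e T w)⁻¹ * (e T 0 * e T z * (e T 0)⁻¹) * e T w := by
        unfold a; group
    _ = e T (z + (w - T w)) := by
        rw [h0, ← e_rel, AddEquiv.apply_symm_apply, add_sub_assoc]

lemma commute_mul_inv_of_inv_mul_mul_eq {G : Type*} [Group G] {c d g : G}
    (h : c⁻¹ * g * c = d⁻¹ * g * d) : Commute (d * c⁻¹) g :=
  calc d * c⁻¹ * g = d * (c⁻¹ * g * c) * c⁻¹ := by group
    _ = g * (d * c⁻¹) := by rw [h]; group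

lemma γ_commute_e (T : M ≃+ M) (x y z : M) : Commute (γ T x y) (e T z) := by
  have hγ : γ T x y = a T (x + y) * (a T x * a T y)⁻¹ :=
    eq_mul_inv_of_mul_eq (by rw [a_add, mul_assoc])
  rw [hγ]
  apply commute_mul_inv_of_inv_mul_mul_eq
  calc (a T x * a T y)⁻¹ * e T z * (a T x * a T y)
      = (a T y)⁻¹ * ((a T x)⁻¹ * e T z * a T x) * a T y := by group
    _ = (a T (x + y))⁻¹ * e T z * a T (x + y) := by
      rw [a_inv_mul_e_mul_a, a_inv_mul_e_mul_a, a_inv_mul_e_mul_a, map_add, add_assoc]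
      congr 2; abel

lemma γ_commute (T : M ≃+ M) (x y : M) (g : Adj T) : Commute (γ T x y) g :=
  (Subgroup.mem_centralizer_singleton_iff.1 <| PresentedGroup.generated_by _ _
    (fun z => Subgroup.mem_centralizer_singleton_iff.2 (γ_commute_e T x y z).eq.symm) g).symm

lemma conj_symm_γ (T : M ≃+ M) (g : Adj T) (x y : M) :
    (MulAut.conj g).symm (γ T x y) = γ T x y := by
  rw [MulAut.conj_symm_apply, ← (γ_commute T x y g⁻¹).eq, inv_mul_cancel_right]

lemma conj_symm_a (T : M ≃+ M) {w u : M} (hu : w - T w = u) (z : M) :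
    (MulAut.conj (a T w)).symm (a T z) = γ T z u * (MulAut.conj (a T u)).symm (a T z) := by
  have hw : (MulAut.conj (a T w)).symm (a T z) = (a T u)⁻¹ * a T (z + u) := by
    calc (MulAut.conj (a T w)).symm (a T z)
        = ((a T w)⁻¹ * e T 0 * a T w)⁻¹ * ((a T w)⁻¹ * e T z * a T w) := by
          rw [MulAut.conj_symm_apply]; unfold a; group
      _ = (a T u)⁻¹ * a T (z + u) := by
          rw [a_inv_mul_e_mul_a, a_inv_mul_e_mul_a, hu, zero_add, a, a]; group
  rw [hw, a_add, MulAut.conj_symm_apply]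
  simp only [mul_assoc, (γ_commute T z u _).left_comm]

lemma γ_add_left (T : M ≃+ M) (hT : Function.Surjective fun x : M => x - T x) (x y u : M) :
    γ T (x + y) u = γ T x u * γ T y u := by
  obtain ⟨w, hw⟩ := hT u
  set φ := (MulAut.conj (a T w)).symm
  set ψ := (MulAut.conj (a T u)).symm
  have hφ : ∀ z, φ (a T z) = γ T z u * ψ (a T z) := conj_symm_a T hw
  have h₁ : φ (a T (x + y)) = γ T (x + y) u * γ T x y * ψ (a T x * a T y) := by
    rw [hφ, a_add, mul_assoc (γ T x y), map_mul, conj_symm_γ, mul_assoc]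
  have h₂ : φ (a T (x + y)) = γ T x y * (γ T x u * γ T y u) * ψ (a T x * a T y) := by
    rw [a_add, map_mul, map_mul, conj_symm_γ, hφ, hφ, map_mul]
    simp only [mul_assoc, (γ_commute T y u _).left_comm]
  have h := mul_right_cancel (h₁.symm.trans h₂)
  rwa [(γ_commute T _ _ _).eq, mul_left_cancel_iff] at h

lemma γ_cocycle (T : M ≃+ M) (x y z : M) :
    γ T x (y + z) * γ T y z = γ T (x + y) z * γ T x y := by
  have h : a T (x + (y + z)) = a T (x + y + z) := by rw [add_assoc]
  rw [a_add, a_add T y, a_add, a_add T x y] at h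
  simp only [mul_assoc, ← (γ_commute T y z (a T x)).left_comm] at h
  apply mul_right_cancel (b := a T x * (a T y * a T z))
  simpa only [mul_assoc] using h

/-- If `1 - T` is invertible then `γ` is bi-additive. -/
theorem statement8 (T : M ≃+ M) (hT : Function.Bijective fun x : M => x - T x) :
    (∀ x x' y : M, γ T (x + x') y = γ T x y * γ T x' y) ∧
    (∀ x y y' : M, γ T x (y + y') = γ T x y * γ T x y') := by
  refine ⟨γ_add_left T hT.2, fun x y y' => mul_right_cancel (b := γ T y y') ?_⟩
  rw [γ_cocycle, γ_add_left T hT.2, mul_assoc, (γ_commute T y y' _).eq, ← mul_assoc,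
    (γ_commute T x y' _).eq]

end Clauwens
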